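/- arXiv:1805.08768 — 2 statements merged into one kernel-verified Lean document; each statement's English description precedes it below -/
import Mathlib

section
/- Let p ∈ (0,1) and b ∈ ℕ, and let D be geometric with P(D = d) = (1−p)^{d−1}p for d ≥ 1. The Golomb code with parameter M = 2^b encodes d using ⌊(d−1)/2^b⌋ + 1 + b bits. Then the expected codeword length equals b + 1/(1 − (1−p)^{2^b}). -/
/-!
Split the gaps `d = j + 2^b m` (with `j < 2^b`) by residue modulo `2^b`: the codeword length
`m + 1 + b` depends only on the block index `m`, and the weight `(1-p)^d p` factors as
`(1-p)^j p · x^m` with `x = (1-p)^(2^b)`. The residues carry total probability `1 - x`, and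
`(1 - x) ∑ x^m (m + c) = c + x / (1 - x)`, which for `c = 1 + b` is `b + 1 / (1 - x)`.
-/

open Finset

theorem tsum_eq_sum_range_tsum_add_mul {R : Type*} [AddCommGroup R] [UniformSpace R]
    [IsUniformAddGroup R] [CompleteSpace R] [T0Space R] {f : ℕ → R} (hf : Summable f)
    (N : ℕ) [NeZero N] :
    ∑' n, f n = ∑ j ∈ range N, ∑' m, f (j + N * m) := by
  rw [Nat.sumByResidueClasses hf N]
  obtain ⟨n, rfl⟩ := Nat.exists_eq_succ_of_ne_zero (NeZero.ne N)
  exact Fin.sum_univ_eq_sum_range (fun j => ∑' m, f (j + (n + 1) * m)) (n + 1)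

theorem one_sub_mul_tsum_pow_mul_add {𝕜 : Type*} [NormedField 𝕜] [CompleteSpace 𝕜] {x : 𝕜}
    (hx : ‖x‖ < 1) (c : 𝕜) :
    (1 - x) * ∑' m : ℕ, x ^ m * (m + c) = c + x / (1 - x) := by
  have hx1 : 1 - x ≠ 0 := by
    rintro h
    simp [← sub_eq_zero.mp h] at hx
  have hsum : ∑' m : ℕ, x ^ m * (m + c) = x / (1 - x) ^ 2 + c * (1 - x)⁻¹ := by
    simp_rw [mul_add, mul_comm (x ^ _) (_ : 𝕜)]
    rw [Summable.tsum_add, tsum_coe_mul_geometric_of_norm_lt_one hx, tsum_mul_left,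
      tsum_geometric_of_norm_lt_one hx]
    · exact summable_pow_mul_geometric_of_norm_lt_one 1 hx |>.congr fun _ => by simp
    · exact (summable_geometric_of_norm_lt_one hx).mul_left c
  rw [hsum]
  field_simp
  ring

theorem summable_pow_mul_natCast_div_add {x : ℝ} (hx0 : 0 ≤ x) (hx1 : x < 1) (N : ℕ) {c : ℝ}
    (hc : 0 ≤ c) : Summable fun n : ℕ => x ^ n * ((n / N : ℕ) + c) := by
  have hx : ‖x‖ < 1 := by rwa [Real.norm_of_nonneg hx0]
  have hdom : Summable fun n : ℕ => (n : ℝ) * x ^ n + c * x ^ n :=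
    (summable_pow_mul_geometric_of_norm_lt_one 1 hx |>.congr fun _ => by simp).add
      ((summable_geometric_of_lt_one hx0 hx1).mul_left c)
  refine hdom.of_nonneg_of_le (fun n => by positivity) fun n => ?_
  have : ((n / N : ℕ) : ℝ) ≤ n := by exact_mod_cast Nat.div_le_self n N
  nlinarith [pow_nonneg hx0 n]

/-- Expected Golomb codeword length for geometric gaps.  The gap `D = d + 1`
(with `d : ℕ`) has probability `(1-p)^d * p`, and the codeword for gap `D`
uses `⌊(D-1)/2^b⌋ + 1 + b` bits. -/
theorem expected_golomb_length
    (p : ℝ) (hp : p ∈ Set.Ioo (0 : ℝ) 1) (b : ℕ) :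
    ∑' d : ℕ, (1 - p) ^ d * p * (((d / 2 ^ b : ℕ) : ℝ) + 1 + b) =
      b + 1 / (1 - (1 - p) ^ (2 ^ b)) := by
  obtain ⟨hp0, hp1⟩ := hp
  have hq0 : 0 ≤ 1 - p := by linarith
  have hq1 : 1 - p < 1 := by linarith
  have hM : 2 ^ b ≠ 0 := by positivity
  have hx : ‖(1 - p) ^ 2 ^ b‖ < 1 := by
    rw [Real.norm_of_nonneg (by positivity)]
    exact pow_lt_one₀ hq0 hq1 hM
  have hsummable := (summable_pow_mul_natCast_div_add hq0 hq1 (2 ^ b) (c := 1 + b)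
    (by positivity)).mul_right p
  have hblock (j : ℕ) (hj : j < 2 ^ b) :
      ∑' m : ℕ, (1 - p) ^ (j + 2 ^ b * m) * p * (((j + 2 ^ b * m) / 2 ^ b : ℕ) + 1 + b : ℝ) =
        (1 - p) ^ j * p * ∑' m : ℕ, ((1 - p) ^ 2 ^ b) ^ m * (m + (1 + b)) := by
    rw [← tsum_mul_left]
    congr 1 with m
    rw [Nat.add_mul_div_left _ _ (Nat.pos_of_ne_zero hM), Nat.div_eq_of_lt hj, pow_add, pow_mul]
    push_cast
    ring
  have hprob : ∑ j ∈ range (2 ^ b), (1 - p) ^ j * p = 1 - (1 - p) ^ 2 ^ b := by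
    simpa [sum_mul] using geom_sum_mul_neg (1 - p) (2 ^ b)
  have : NeZero (2 ^ b) := ⟨hM⟩
  rw [tsum_eq_sum_range_tsum_add_mul (hsummable.congr fun d => by ring) (2 ^ b),
    sum_congr rfl fun j hj => hblock j (mem_range.mp hj), ← sum_mul, hprob,
    one_sub_mul_tsum_pow_mul_add hx]
  have : 1 - (1 - p) ^ 2 ^ b ≠ 0 := (sub_pos.mpr (pow_lt_one₀ hq0 hq1 hM)).ne'
  field_simp
  ring
end

section
/- Golomb position encoding followed by decoding is the identity: for any strictly increasing sequence of positive integers 0 < i₁ < i₂ < … < i_k and any b ≥ 0, encoding the gaps d_j = i_j − i_{j−1} (with i₀ = 0) via q_j = (d_j − 1) div 2^b ones, a zero, and the b-bit binary representation of r_j = (d_j − 1) mod 2^b, and then decoding by the recursion i_j = i_{j−1} + q_j·2^b + r_j + 1, recovers the original sequence i₁,…,i_k. -/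
theorem Nat.div_mul_add_mod_pred_add_one {n : ℕ} (hn : 0 < n) (m : ℕ) :
    (n - 1) / m * m + (n - 1) % m + 1 = n := by
  rw [Nat.div_add_mod']
  omega

theorem Nat.eq_of_increments_eq {k : ℕ} {f g : ℕ → ℕ} (h0 : f 0 = g 0)
    (hmono : ∀ j < k, g j ≤ g (j + 1))
    (hstep : ∀ j < k, f (j + 1) = f j + (g (j + 1) - g j)) :
    ∀ j ≤ k, f j = g j := by
  intro j hj
  induction j with
  | zero => exact h0
  | succ j ih =>
    have := hmono j hj
    rw [hstep j hj, ih (by omega)]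
    omega

/-- Golomb position encoding followed by decoding recovers the original strictly
increasing sequence of positive non-zero positions. -/
theorem golomb_roundtrip
    (k b : ℕ) (i : ℕ → ℕ)
    (hi0 : i 0 = 0)
    (hmono : ∀ j, j < k → i j < i (j + 1))
    (d q r decoded : ℕ → ℕ)
    (hd : ∀ j, 1 ≤ j → j ≤ k → d j = i j - i (j - 1))
    (hq : ∀ j, 1 ≤ j → j ≤ k → q j = (d j - 1) / 2 ^ b)
    (hr : ∀ j, 1 ≤ j → j ≤ k → r j = (d j - 1) % 2 ^ b)
    (hdec0 : decoded 0 = 0)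
    (hdec : ∀ j, 1 ≤ j → j ≤ k →
      decoded j = decoded (j - 1) + q j * 2 ^ b + r j + 1) :
    ∀ j, j ≤ k → decoded j = i j := by
  refine Nat.eq_of_increments_eq (hdec0.trans hi0.symm) (fun j hj => (hmono j hj).le)
    fun j hj => ?_
  have hj1 : 1 ≤ j + 1 := j.succ_pos
  have hgap : d (j + 1) = i (j + 1) - i j := hd _ hj1 hj
  have hgap_pos : 0 < d (j + 1) := hgap ▸ Nat.sub_pos_of_lt (hmono j hj)
  calc decoded (j + 1)
      = decoded j + ((d (j + 1) - 1) / 2 ^ b * 2 ^ b + (d (j + 1) - 1) % 2 ^ b + 1) := by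
        rw [hdec _ hj1 hj, hq _ hj1 hj, hr _ hj1 hj, Nat.add_sub_cancel]
        ring
    _ = decoded j + (i (j + 1) - i j) := by
        rw [Nat.div_mul_add_mod_pred_add_one hgap_pos, hgap]
end
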